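/- Let m > 0, n ≥ 1, and let U ⊆ ℂⁿ be open, with holomorphic and antiholomorphic Wirtinger derivatives ∂_{a_j}, ∂_{ā_j} in the coordinates a = (a₁, …, aₙ). Let C₁, D₁ : U → Matrix n n ℂ be twice continuously differentiable and let G : U → Matrix n n ℂ be continuously differentiable with G(a) invertible and Hermitian (G(a)† = G(a)) for all a ∈ U. Denote by E_j the diagonal matrix unit with 1 in entry (j, j), and by Ḡ the entrywise complex conjugate of G. Assume for all j, k: (i) ∂_{ā_j} C₁ = (m/2)[E_j, G] G⁻¹; (ii) ∂_{a_j} D₁ = (m/2)[E_j, Ḡ] Ḡ⁻¹; (iii) ∂_{a_j}(C₁)_{kk} = (m/2)([E_j, C₁] C₁)_{kk}; (iv) ∂_{ā_j}(D₁)_{kk} = (m/2)([E_j, D₁] D₁)_{kk}. Then the 1-form Ω = (m/2) ∑_j ((C₁)_{jj} da_j + (D₁)_{jj} dā_j) is closed; explicitly, for all j, k: ∂_{a_k}(C₁)_{jj} = ∂_{a_j}(C₁)_{kk}, ∂_{ā_k}(D₁)_{jj} = ∂_{ā_j}(D₁)_{kk}, and ∂_{ā_k}(C₁)_{jj} = ∂_{a_j}(D₁)_{kk}.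 -/

import Mathlib

/-!
Equations (i)–(iv) give every first Wirtinger derivative of the diagonal entries of `C₁` and `D₁`
algebraically, so closedness of `Ω` reduces to identities between matrix entries. With
`E_j = single j j 1` one has `([E_j, A] B)_kk = δ_jk (AB)_jj − A_kj B_jk`. For `B = A` this is
symmetric in `j, k`; for commuting `A, B` it equals the same expression for `Aᵀ, Bᵀ` with `j, k`
swapped. Since `G` is Hermitian, `Ḡ = Gᵀ` and `Ḡ⁻¹ = (G⁻¹)ᵀ`, and `G` commutes with `G⁻¹`.
-/

open Matrix Complex

/-- Holomorphic Wirtinger derivative `∂_{a_j} F = (1/2)(∂_{x_j} − i ∂_{y_j})F` of a function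
`F : ℂⁿ → ℂ`, computed from the real Fréchet derivative. -/
noncomputable def wD {n : ℕ} (j : Fin n) (F : (Fin n → ℂ) → ℂ) (a : Fin n → ℂ) : ℂ :=
  (1 / 2 : ℂ) * (fderiv ℝ F a (Pi.single j 1) - Complex.I * fderiv ℝ F a (Pi.single j Complex.I))

/-- Antiholomorphic Wirtinger derivative `∂_{ā_j} F = (1/2)(∂_{x_j} + i ∂_{y_j})F`. -/
noncomputable def wDbar {n : ℕ} (j : Fin n) (F : (Fin n → ℂ) → ℂ) (a : Fin n → ℂ) : ℂ :=
  (1 / 2 : ℂ) * (fderiv ℝ F a (Pi.single j 1) + Complex.I * fderiv ℝ F a (Pi.single j Complex.I))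

namespace Matrix

theorem IsHermitian.map_starRingEnd_eq_transpose {ι R : Type*} [CommSemiring R] [StarRing R]
    {A : Matrix ι ι R} (hA : A.IsHermitian) : A.map (starRingEnd R) = Aᵀ := by
  ext i j
  exact congr_fun₂ hA j i

variable {ι R : Type*} [Fintype ι] [DecidableEq ι] [CommRing R]

theorem commute_nonsing_inv (A : Matrix ι ι R) : Commute A A⁻¹ := by
  rw [inv_def]
  refine Commute.smul_right ?_ _
  rw [Commute, SemiconjBy, mul_adjugate, adjugate_mul]

theorem single_commutator_mul_apply_self (A B : Matrix ι ι R) (j k : ι) :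
    ((single j j 1 * A - A * single j j 1) * B : Matrix ι ι R) k k
      = (if k = j then (A * B) j j else 0) - A k j * B j k := by
  rw [sub_mul, sub_apply, mul_assoc, mul_assoc]
  congr 1
  · by_cases h : k = j
    · subst h; simp
    · simp [h]
  · simp [mul_apply, single, ite_and]

theorem single_commutator_mul_self_apply_self_comm (M : Matrix ι ι R) (j k : ι) :
    ((single j j 1 * M - M * single j j 1) * M : Matrix ι ι R) k k
      = ((single k k 1 * M - M * single k k 1) * M : Matrix ι ι R) j j := by
  rw [single_commutator_mul_apply_self, single_commutator_mul_apply_self]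
  by_cases h : k = j
  · subst h; rfl
  · simp [h, Ne.symm h, mul_comm]

theorem single_commutator_mul_apply_self_transpose {A B : Matrix ι ι R} (hAB : Commute A B)
    (j k : ι) :
    ((single k k 1 * A - A * single k k 1) * B : Matrix ι ι R) j j
      = ((single j j 1 * Aᵀ - Aᵀ * single j j 1) * Bᵀ : Matrix ι ι R) k k := by
  rw [single_commutator_mul_apply_self, single_commutator_mul_apply_self, ← transpose_mul,
    hAB.eq]
  by_cases h : j = k
  · subst h; simp
  · simp [h, Ne.symm h]

end Matrix

theorem omega_form_closed_general
    (m : ℝ) (n : ℕ)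
    (U : Set (Fin n → ℂ))
    (C₁ D₁ G : (Fin n → ℂ) → Matrix (Fin n) (Fin n) ℂ)
    (hGherm : ∀ a ∈ U, (G a)ᴴ = G a)
    (hi : ∀ a ∈ U, ∀ j : Fin n, ∀ p q : Fin n,
      wDbar j (fun b => C₁ b p q) a
        = (((m / 2 : ℂ) • ((Matrix.single j j 1 * G a - G a * Matrix.single j j 1) * (G a)⁻¹)) : Matrix (Fin n) (Fin n) ℂ) p q)
    (hii : ∀ a ∈ U, ∀ j : Fin n, ∀ p q : Fin n,
      wD j (fun b => D₁ b p q) a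
        = (((m / 2 : ℂ) • ((Matrix.single j j 1 * (G a).map (starRingEnd ℂ)
            - (G a).map (starRingEnd ℂ) * Matrix.single j j 1) * ((G a).map (starRingEnd ℂ))⁻¹)) : Matrix (Fin n) (Fin n) ℂ) p q)
    (hiii : ∀ a ∈ U, ∀ j k : Fin n,
      wD j (fun b => C₁ b k k) a
        = (((m / 2 : ℂ) • ((Matrix.single j j 1 * C₁ a - C₁ a * Matrix.single j j 1) * C₁ a)) : Matrix (Fin n) (Fin n) ℂ) k k)
    (hiv : ∀ a ∈ U, ∀ j k : Fin n,
      wDbar j (fun b => D₁ b k k) a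
        = (((m / 2 : ℂ) • ((Matrix.single j j 1 * D₁ a - D₁ a * Matrix.single j j 1) * D₁ a)) : Matrix (Fin n) (Fin n) ℂ) k k) :
    ∀ a ∈ U, ∀ j k : Fin n,
      wD k (fun b => C₁ b j j) a = wD j (fun b => C₁ b k k) a ∧
      wDbar k (fun b => D₁ b j j) a = wDbar j (fun b => D₁ b k k) a ∧
      wDbar k (fun b => C₁ b j j) a = wD j (fun b => D₁ b k k) a := by
  intro a ha j k
  have hGbar : (G a).map (starRingEnd ℂ) = (G a)ᵀ :=
    IsHermitian.map_starRingEnd_eq_transpose (hGherm a ha)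
  refine ⟨?_, ?_, ?_⟩
  · rw [hiii a ha k j, hiii a ha j k, Matrix.smul_apply, Matrix.smul_apply,
      single_commutator_mul_self_apply_self_comm (C₁ a) k j]
  · rw [hiv a ha k j, hiv a ha j k, Matrix.smul_apply, Matrix.smul_apply,
      single_commutator_mul_self_apply_self_comm (D₁ a) k j]
  · rw [hi a ha k j j, hii a ha j k k, hGbar, ← transpose_nonsing_inv, Matrix.smul_apply, Matrix.smul_apply,
      single_commutator_mul_apply_self_transpose (commute_nonsing_inv (G a))]

/-- Under the isomonodromic deformation equations (i)–(iv), the 1-form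
`Ω = (m/2) ∑_j ((C₁)_{jj} da_j + (D₁)_{jj} dā_j)` is closed; explicitly the three
families of mixed-derivative symmetries hold. -/
theorem omega_form_closed
    (m : ℝ) (hm : 0 < m) (n : ℕ) (hn : 1 ≤ n)
    (U : Set (Fin n → ℂ)) (hU : IsOpen U)
    (C₁ D₁ G : (Fin n → ℂ) → Matrix (Fin n) (Fin n) ℂ)
    (hC₁ : ∀ p q : Fin n, ContDiffOn ℝ 2 (fun a => C₁ a p q) U)
    (hD₁ : ∀ p q : Fin n, ContDiffOn ℝ 2 (fun a => D₁ a p q) U)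
    (hG : ∀ p q : Fin n, ContDiffOn ℝ 1 (fun a => G a p q) U)
    (hGunit : ∀ a ∈ U, IsUnit (G a))
    (hGherm : ∀ a ∈ U, (G a)ᴴ = G a)
    (hi : ∀ a ∈ U, ∀ j : Fin n, ∀ p q : Fin n,
      wDbar j (fun b => C₁ b p q) a
        = (((m / 2 : ℂ) • ((Matrix.single j j 1 * G a - G a * Matrix.single j j 1) * (G a)⁻¹)) : Matrix (Fin n) (Fin n) ℂ) p q)
    (hii : ∀ a ∈ U, ∀ j : Fin n, ∀ p q : Fin n,
      wD j (fun b => D₁ b p q) a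
        = (((m / 2 : ℂ) • ((Matrix.single j j 1 * (G a).map (starRingEnd ℂ)
            - (G a).map (starRingEnd ℂ) * Matrix.single j j 1) * ((G a).map (starRingEnd ℂ))⁻¹)) : Matrix (Fin n) (Fin n) ℂ) p q)
    (hiii : ∀ a ∈ U, ∀ j k : Fin n,
      wD j (fun b => C₁ b k k) a
        = (((m / 2 : ℂ) • ((Matrix.single j j 1 * C₁ a - C₁ a * Matrix.single j j 1) * C₁ a)) : Matrix (Fin n) (Fin n) ℂ) k k)
    (hiv : ∀ a ∈ U, ∀ j k : Fin n,
      wDbar j (fun b => D₁ b k k) a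
        = (((m / 2 : ℂ) • ((Matrix.single j j 1 * D₁ a - D₁ a * Matrix.single j j 1) * D₁ a)) : Matrix (Fin n) (Fin n) ℂ) k k) :
    ∀ a ∈ U, ∀ j k : Fin n,
      wD k (fun b => C₁ b j j) a = wD j (fun b => C₁ b k k) a ∧
      wDbar k (fun b => D₁ b j j) a = wDbar j (fun b => D₁ b k k) a ∧
      wDbar k (fun b => C₁ b j j) a = wD j (fun b => D₁ b k k) a :=
  omega_form_closed_general m n U C₁ D₁ G hGherm hi hii hiii hiv
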